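/- BIC asymptotic equivalence: under the assumptions that RSS_ℓ/RSS₀ and RSS_k/RSS₀ converge to positive constants c_ℓ, c_k as n → ∞ with c_ℓ, c_k ∈ (0,1], the difference −2 log BF_{ℓk}^{J-PEP} − [ n log(RSS_ℓ/RSS_k) + (d_ℓ − d_k) log n ] stays bounded as n → ∞, where BF_{ℓk}^{J-PEP} = BF_{ℓ0}^{J-PEP}/BF_{k0}^{J-PEP} and BF_{ℓ0}^{J-PEP} is given by the integral formula 2[Γ(n−d_ℓ)/Γ((n−d_ℓ)/2)²]∫₀^{π/2}(sinφ)^{n−d₀−1}(cosφ)^{n−d_ℓ−1}(n+sin²φ)^{(n−d_ℓ)/2}(n RSS_ℓ/RSS₀ + sin²φ)^{−(n−d₀)/2} dφ. -/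

import Mathlib

open Real Filter MeasureTheory

/-- The J-PEP Bayes factor of `M_ℓ` (dimension `dl`) versus the reference
model `M₀` (dimension `d0`), equation (4.4) of the paper. -/
noncomputable def BFJPEP (d0 dl : ℕ) (n : ℕ) (RSSl RSS0 : ℝ) : ℝ :=
  2 * (Real.Gamma ((n : ℝ) - dl) / Real.Gamma (((n : ℝ) - dl) / 2) ^ 2) *
    ∫ φ in (0 : ℝ)..(π / 2),
      Real.sin φ ^ ((n : ℝ) - d0 - 1) * Real.cos φ ^ ((n : ℝ) - dl - 1) *
        ((n : ℝ) + Real.sin φ ^ 2) ^ (((n : ℝ) - dl) / 2) *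
        ((n : ℝ) * (RSSl / RSS0) + Real.sin φ ^ 2) ^ (-((n : ℝ) - d0) / 2)

/-!
With `ρ = RSS / RSS₀`, the factors `(n + sin² φ) ^ ((n - d)/2)` and `(n ρ + sin² φ) ^ (-(n - d₀)/2)`
of the J-PEP integrand stay within the factors `e ^ (1/2)` and `e ^ (-1/(2ρ))` of their values at
`φ = 0` (because `(1 + u) ^ p ≤ e ^ (p u)`). What is left is a Beta integral, so `log BF_{ℓ0}` is,
up to a bounded error, a combination of `log Γ` terms plus
`((d₀ - d_ℓ)/2) log n - ((n - d₀)/2) log ρ_ℓ`. Log-convexity of `Γ` gives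
`log Γ (x + γ) = log Γ x + γ log x + o(1)`, so the `log Γ` terms of the two models differ by
`O(1)`; the rest of `-2 log BF_{ℓk}` is `n log (RSS_ℓ / RSS_k) + (d_ℓ - d_k) log n` up to the
convergent term `d₀ log (ρ_ℓ / ρ_k)`.
-/

open Asymptotics Topology Set

theorem log_Gamma_add_one_sub_log_Gamma {x : ℝ} (hx : 0 < x) :
    log (Gamma (x + 1)) - log (Gamma x) = log x := by
  rw [Gamma_add_one hx.ne', log_mul hx.ne' (Gamma_pos_of_pos hx).ne']
  ring

theorem mul_log_sub_one_le_log_Gamma_add_sub_log_Gamma {x δ : ℝ} (hx : 1 < x) (hδ : 0 ≤ δ) :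
    δ * log (x - 1) ≤ log (Gamma (x + δ)) - log (Gamma x) := by
  rcases hδ.eq_or_lt with rfl | hδ
  · simp
  have hslope := convexOn_log_Gamma.slope_mono_adjacent (x := x - 1) (y := x) (z := x + δ)
    (by simp; linarith) (by simp; linarith) (by linarith) (by linarith)
  have hstep := log_Gamma_add_one_sub_log_Gamma (by linarith : 0 < x - 1)
  simp only [Function.comp_apply, sub_sub_cancel, div_one, add_sub_cancel_left, sub_add_cancel]
    at hslope hstep
  rw [hstep, le_div_iff₀ hδ] at hslope
  linarith

theorem log_Gamma_add_sub_log_Gamma_le_mul_log {x δ : ℝ} (hx : 0 < x) (hδ : 0 ≤ δ) :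
    log (Gamma (x + δ)) - log (Gamma x) ≤ δ * log (x + δ) := by
  rcases hδ.eq_or_lt with rfl | hδ
  · simp
  have hslope := convexOn_log_Gamma.slope_mono_adjacent (x := x) (y := x + δ) (z := x + δ + 1)
    (by simp; linarith) (by simp; linarith) (by linarith) (by linarith)
  have hstep := log_Gamma_add_one_sub_log_Gamma (by linarith : 0 < x + δ)
  simp only [Function.comp_apply, add_sub_cancel_left, div_one] at hslope hstep
  rw [hstep, div_le_iff₀ hδ] at hslope
  linarith

theorem tendsto_log_Gamma_add_sub_log_Gamma_sub_mul_log_of_nonneg {δ : ℝ} (hδ : 0 ≤ δ) :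
    Tendsto (fun x => log (Gamma (x + δ)) - log (Gamma x) - δ * log x) atTop (𝓝 0) := by
  have hlow := (tendsto_log_comp_add_sub_log (-1)).const_mul δ
  have hup := (tendsto_log_comp_add_sub_log δ).const_mul δ
  rw [mul_zero] at hlow hup
  refine tendsto_of_tendsto_of_tendsto_of_le_of_le' hlow hup ?_ ?_
  · filter_upwards [eventually_gt_atTop 1] with x hx
    have := mul_log_sub_one_le_log_Gamma_add_sub_log_Gamma hx hδ
    rw [← sub_eq_add_neg, mul_sub]
    linarith
  · filter_upwards [eventually_gt_atTop 0] with x hx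
    have := log_Gamma_add_sub_log_Gamma_le_mul_log hx hδ
    rw [mul_sub]
    linarith

theorem tendsto_log_Gamma_add_sub_log_Gamma_sub_mul_log (γ : ℝ) :
    Tendsto (fun x => log (Gamma (x + γ)) - log (Gamma x) - γ * log x) atTop (𝓝 0) := by
  rcases le_total 0 γ with hγ | hγ
  · exact tendsto_log_Gamma_add_sub_log_Gamma_sub_mul_log_of_nonneg hγ
  have hshift := (tendsto_log_Gamma_add_sub_log_Gamma_sub_mul_log_of_nonneg
    (neg_nonneg.2 hγ)).comp (tendsto_atTop_add_const_right _ γ tendsto_id)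
  have hlog := (tendsto_log_comp_add_sub_log γ).const_mul γ
  have := hshift.neg.add hlog
  rw [neg_zero, mul_zero, add_zero] at this
  refine this.congr fun x => ?_
  simp only [Function.comp_apply, id, add_neg_cancel_right]
  ring

theorem tendsto_log_Gamma_affine_add_sub {β : ℝ} (hβ : 0 < β) (γ₀ γ : ℝ) :
    Tendsto (fun x => log (Gamma (β * x + γ₀ + γ)) - log (Gamma (β * x + γ₀)) - γ * log x)
      atTop (𝓝 (γ * log β)) := by
  have hβx : Tendsto (fun x => β * x) atTop atTop := tendsto_id.const_mul_atTop hβ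
  have hΓ := (tendsto_log_Gamma_add_sub_log_Gamma_sub_mul_log γ).comp
    (tendsto_atTop_add_const_right _ γ₀ hβx)
  have hlog := ((tendsto_log_comp_add_sub_log γ₀).comp hβx).const_mul γ
  have := (hΓ.add hlog).add_const (γ * log β)
  rw [mul_zero, zero_add, zero_add] at this
  refine this.congr' ?_
  filter_upwards [eventually_gt_atTop 0] with x hx
  simp only [Function.comp_apply, log_mul hβ.ne' hx.ne']
  ring

noncomputable def logGammaFactor (d0 d n : ℕ) : ℝ :=
  log (Gamma (n - d)) + log (Gamma ((n - d0) / 2)) - log (Gamma ((n - d) / 2))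
    - log (Gamma ((n - d0) / 2 + (n - d) / 2))

theorem tendsto_logGammaFactor_sub_logGammaFactor_zero (d0 d : ℕ) :
    Tendsto (fun n => logGammaFactor d0 d n - logGammaFactor d0 0 n) atTop
      (𝓝 (-(d / 2 * log 2))) := by
  -- The `log n` parts `-d`, `d/2`, `d/2` of the three shifts cancel; the scale `1/2` of the
  -- second one leaves the constant.
  have h1 := tendsto_log_Gamma_affine_add_sub one_pos 0 (-d)
  have h2 := tendsto_log_Gamma_affine_add_sub (by norm_num : (0 : ℝ) < 1 / 2) 0 (-d / 2)
  have h3 := tendsto_log_Gamma_affine_add_sub one_pos (-d0 / 2) (-d / 2)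
  convert ((h1.sub h2).sub h3).comp tendsto_natCast_atTop_atTop using 2
  · simp only [logGammaFactor, Function.comp_apply]
    ring_nf
  · simp only [log_one, one_div, log_inv]
    ring

theorem intervalIntegral_rpow_mul_one_sub_rpow {a b : ℝ} (ha : 0 < a) (hb : 0 < b) :
    ∫ t in (0 : ℝ)..1, t ^ (a - 1) * (1 - t) ^ (b - 1) = ProbabilityTheory.beta a b := by
  have hcast :
      Complex.betaIntegral a b = ↑(∫ t in (0 : ℝ)..1, t ^ (a - 1) * (1 - t) ^ (b - 1)) := by
    rw [Complex.betaIntegral, ← intervalIntegral.integral_ofReal]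
    refine intervalIntegral.integral_congr fun t ht => ?_
    rw [uIcc_of_le zero_le_one] at ht
    simp only [Complex.ofReal_mul, Complex.ofReal_cpow ht.1,
      Complex.ofReal_cpow (sub_nonneg.2 ht.2)]
    push_cast
    rfl
  rw [ProbabilityTheory.beta_eq_betaIntegralReal a b ha hb, hcast, Complex.ofReal_re]

theorem rpow_two_mul_sub_one {s : ℝ} (hs : 0 ≤ s) {p : ℝ} (hp : p ≠ 1 / 2) :
    s ^ (2 * p - 1) = s * (s ^ 2) ^ (p - 1) := by
  rw [← rpow_natCast, ← rpow_mul hs, ← rpow_one_add' hs]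
  · push_cast; ring_nf
  · push_cast; intro h; apply hp; linarith

theorem intervalIntegral_sin_rpow_mul_cos_rpow {a b : ℝ} (ha : 1 ≤ a) (hb : 1 ≤ b) :
    ∫ φ in (0 : ℝ)..(π / 2), sin φ ^ (2 * a - 1) * cos φ ^ (2 * b - 1) =
      ProbabilityTheory.beta a b / 2 := by
  have hsub := intervalIntegral.integral_comp_mul_deriv (a := 0) (b := π / 2)
    (f := fun φ => sin φ ^ 2) (f' := fun φ => 2 * sin φ * cos φ)
    (g := fun t => t ^ (a - 1) * (1 - t) ^ (b - 1))
    (fun φ _ => by simpa [mul_comm, mul_assoc] using (hasDerivAt_sin φ).fun_pow 2)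
    (by fun_prop)
    ((continuous_id.rpow_const fun _ => Or.inr (by linarith)).mul
      ((continuous_const.sub continuous_id).rpow_const fun _ => Or.inr (by linarith)))
  rw [sin_zero, sin_pi_div_two, zero_pow two_ne_zero, one_pow,
    intervalIntegral_rpow_mul_one_sub_rpow (by linarith) (by linarith)] at hsub
  rw [← hsub, ← intervalIntegral.integral_div]
  refine intervalIntegral.integral_congr fun φ hφ => ?_
  rw [uIcc_of_le (by positivity)] at hφ
  have hsin : 0 ≤ sin φ := sin_nonneg_of_nonneg_of_le_pi hφ.1 (by linarith [pi_pos, hφ.2])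
  have hcos : 0 ≤ cos φ := cos_nonneg_of_mem_Icc ⟨by linarith [pi_pos, hφ.1], hφ.2⟩
  simp only [Function.comp_apply, ← cos_sq',
    rpow_two_mul_sub_one hsin (by linarith : a ≠ 1 / 2),
    rpow_two_mul_sub_one hcos (by linarith : b ≠ 1 / 2)]
  ring

theorem rpow_add_le_exp_mul_rpow {y t p : ℝ} (hy : 0 < y) (ht : 0 ≤ t) (hp : 0 ≤ p) :
    (y + t) ^ p ≤ exp (p * t / y) * y ^ p := by
  calc (y + t) ^ p = (1 + t / y) ^ p * y ^ p := by
        rw [← mul_rpow (by positivity) hy.le, add_mul, one_mul, div_mul_cancel₀ _ hy.ne',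
          add_comm]
    _ ≤ exp (t / y) ^ p * y ^ p := by
        gcongr
        linarith [add_one_le_exp (t / y)]
    _ = exp (p * t / y) * y ^ p := by rw [← exp_mul]; ring_nf

theorem exp_neg_mul_rpow_neg_le_rpow_add_neg {y t p : ℝ} (hy : 0 < y) (ht : 0 ≤ t)
    (hp : 0 ≤ p) :
    exp (-(p * t / y)) * y ^ (-p) ≤ (y + t) ^ (-p) := by
  rw [rpow_neg hy.le, rpow_neg (by positivity), exp_neg, ← mul_inv]
  exact inv_anti₀ (by positivity) (rpow_add_le_exp_mul_rpow hy ht hp)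

section

variable {N ρ a b t : ℝ}

theorem le_rpow_add_mul_rpow_add_neg (hN : 0 < N) (hρ : 0 < ρ) (ha : 0 ≤ a) (haN : a ≤ N / 2)
    (hb : 0 ≤ b) (ht : 0 ≤ t) (ht1 : t ≤ 1) :
    exp (-(1 / (2 * ρ))) * (N ^ b * (N * ρ) ^ (-a)) ≤ (N + t) ^ b * (N * ρ + t) ^ (-a) := by
  have hexp : exp (-(1 / (2 * ρ))) ≤ exp (-(a * t / (N * ρ))) := by
    have hat : a * t ≤ N / 2 := by nlinarith
    refine exp_le_exp.2 (neg_le_neg ?_)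
    rw [div_le_div_iff₀ (by positivity) (by positivity)]
    nlinarith
  calc exp (-(1 / (2 * ρ))) * (N ^ b * (N * ρ) ^ (-a))
      ≤ N ^ b * (exp (-(a * t / (N * ρ))) * (N * ρ) ^ (-a)) := by
        rw [mul_left_comm]; gcongr
    _ ≤ (N + t) ^ b * (N * ρ + t) ^ (-a) := by
        gcongr ?_ * ?_
        · exact rpow_le_rpow hN.le (by linarith) hb
        · exact exp_neg_mul_rpow_neg_le_rpow_add_neg (by positivity) ht ha

theorem rpow_add_mul_rpow_add_neg_le (hN : 0 < N) (hρ : 0 < ρ) (hb : 0 ≤ b) (hbN : b ≤ N / 2)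
    (ha : 0 ≤ a) (ht : 0 ≤ t) (ht1 : t ≤ 1) :
    (N + t) ^ b * (N * ρ + t) ^ (-a) ≤ exp (1 / 2) * (N ^ b * (N * ρ) ^ (-a)) := by
  have hexp : exp (b * t / N) ≤ exp (1 / 2) := by
    refine exp_le_exp.2 ?_
    rw [div_le_div_iff₀ hN two_pos]
    nlinarith
  calc (N + t) ^ b * (N * ρ + t) ^ (-a) ≤ (exp (b * t / N) * N ^ b) * (N * ρ) ^ (-a) := by
        gcongr ?_ * ?_
        · exact rpow_add_le_exp_mul_rpow hN ht hb
        · exact rpow_le_rpow_of_nonpos (by positivity) (by linarith) (by linarith)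
    _ ≤ exp (1 / 2) * (N ^ b * (N * ρ) ^ (-a)) := by
        rw [mul_assoc]; gcongr

theorem intervalIntegral_sin_cos_rpow_mul_weight_mem_Icc (hρ : 0 < ρ) (ha : 1 ≤ a)
    (hb : 1 ≤ b) (haN : a ≤ N / 2) (hbN : b ≤ N / 2) :
    ∫ φ in (0 : ℝ)..(π / 2), sin φ ^ (2 * a - 1) * cos φ ^ (2 * b - 1) *
        (N + sin φ ^ 2) ^ b * (N * ρ + sin φ ^ 2) ^ (-a) ∈
      Icc (exp (-(1 / (2 * ρ))) * (N ^ b * (N * ρ) ^ (-a)) * (ProbabilityTheory.beta a b / 2))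
        (exp (1 / 2) * (N ^ b * (N * ρ) ^ (-a)) * (ProbabilityTheory.beta a b / 2)) := by
  have hN : 0 < N := by linarith
  have ha₀ : 0 ≤ a := by linarith
  have hb₀ : 0 ≤ b := by linarith
  have hf₀ : Continuous fun φ => sin φ ^ (2 * a - 1) * cos φ ^ (2 * b - 1) :=
    (continuous_sin.rpow_const fun _ => Or.inr (by linarith)).mul
      (continuous_cos.rpow_const fun _ => Or.inr (by linarith))
  have hf : Continuous fun φ => sin φ ^ (2 * a - 1) * cos φ ^ (2 * b - 1) *
      (N + sin φ ^ 2) ^ b * (N * ρ + sin φ ^ 2) ^ (-a) :=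
    (hf₀.mul ((continuous_const.add (continuous_sin.pow 2)).rpow_const
      fun _ => Or.inr (by linarith))).mul
      ((continuous_const.add (continuous_sin.pow 2)).rpow_const
      fun φ => Or.inl (add_pos_of_pos_of_nonneg (mul_pos hN hρ) (sq_nonneg _)).ne')
  have hweight : ∀ φ ∈ Icc 0 (π / 2), 0 ≤ sin φ ^ (2 * a - 1) * cos φ ^ (2 * b - 1) ∧
      0 ≤ sin φ ^ 2 ∧ sin φ ^ 2 ≤ 1 := fun φ hφ =>
    ⟨mul_nonneg
      (rpow_nonneg (sin_nonneg_of_nonneg_of_le_pi hφ.1 (by linarith [pi_pos, hφ.2])) _)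
      (rpow_nonneg (cos_nonneg_of_mem_Icc ⟨by linarith [pi_pos, hφ.1], hφ.2⟩) _),
      sq_nonneg _, sin_sq_le_one φ⟩
  rw [← intervalIntegral_sin_rpow_mul_cos_rpow ha hb, ← intervalIntegral.integral_const_mul,
    ← intervalIntegral.integral_const_mul]
  constructor
  · refine intervalIntegral.integral_mono_on (by positivity)
      ((continuous_const.mul hf₀).intervalIntegrable _ _) (hf.intervalIntegrable _ _)
      fun φ hφ => ?_
    obtain ⟨h₀, ht, ht1⟩ := hweight φ hφ
    have := mul_le_mul_of_nonneg_left (le_rpow_add_mul_rpow_add_neg hN hρ ha₀ haN hb₀ ht ht1) h₀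
    linarith
  · refine intervalIntegral.integral_mono_on (by positivity) (hf.intervalIntegrable _ _)
      ((continuous_const.mul hf₀).intervalIntegrable _ _) fun φ hφ => ?_
    obtain ⟨h₀, ht, ht1⟩ := hweight φ hφ
    have := mul_le_mul_of_nonneg_left (rpow_add_mul_rpow_add_neg_le hN hρ hb₀ hbN ha₀ ht ht1) h₀
    linarith

end

noncomputable def logLaplaceBFJPEP (d0 d n : ℕ) (ρ : ℝ) : ℝ :=
  logGammaFactor d0 d n + ((d0 - d) / 2 : ℝ) * log n - ((n - d0) / 2 : ℝ) * log ρ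

theorem exp_logLaplaceBFJPEP {d0 d n : ℕ} {ρ : ℝ} (hd0 : d0 < n) (hd : d < n) (hρ : 0 < ρ) :
    exp (logLaplaceBFJPEP d0 d n ρ) = 2 * (Gamma (n - d) / Gamma ((n - d) / 2) ^ 2) *
      ((n : ℝ) ^ (((n : ℝ) - d) / 2) * (n * ρ) ^ (-(((n : ℝ) - d0) / 2)) *
        (ProbabilityTheory.beta (((n : ℝ) - d0) / 2) (((n : ℝ) - d) / 2) / 2)) := by
  have hn : (0 : ℝ) < n := by exact_mod_cast (Nat.zero_le _).trans_lt hd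
  have hd' : (0 : ℝ) < n - d := sub_pos.2 (by exact_mod_cast hd)
  have hd0' : (0 : ℝ) < n - d0 := sub_pos.2 (by exact_mod_cast hd0)
  have hΓ₁ := Gamma_pos_of_pos hd'
  have hΓa := Gamma_pos_of_pos (half_pos hd0')
  have hΓb := Gamma_pos_of_pos (half_pos hd')
  have hΓab := Gamma_pos_of_pos (add_pos (half_pos hd0') (half_pos hd'))
  refine (congrArg exp ?_).trans (exp_log (by unfold ProbabilityTheory.beta; positivity))
  symm
  rw [ProbabilityTheory.beta, log_mul (by positivity) (by positivity),
    log_mul two_ne_zero (by positivity), log_div hΓ₁.ne' (by positivity), log_pow,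
    log_mul (by positivity) (by positivity), log_mul (by positivity) (by positivity),
    log_div (by positivity) two_ne_zero, log_div (by positivity) hΓab.ne',
    log_mul hΓa.ne' hΓb.ne', log_rpow hn, log_rpow (by positivity), log_mul hn.ne' hρ.ne',
    logLaplaceBFJPEP, logGammaFactor]
  push_cast
  ring

theorem BFJPEP_mem_Icc {d0 d n : ℕ} {R R0 : ℝ} (hρ : 0 < R / R0) (hd0 : d0 + 2 ≤ n)
    (hd : d + 2 ≤ n) :
    BFJPEP d0 d n R R0 ∈ Icc (exp (logLaplaceBFJPEP d0 d n (R / R0) - 1 / (2 * (R / R0))))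
      (exp (logLaplaceBFJPEP d0 d n (R / R0) + 1 / 2)) := by
  have hd0' : (d0 : ℝ) + 2 ≤ n := by exact_mod_cast hd0
  have hd' : (d : ℝ) + 2 ≤ n := by exact_mod_cast hd
  have hI := intervalIntegral_sin_cos_rpow_mul_weight_mem_Icc (N := n) hρ
    (a := ((n : ℝ) - d0) / 2) (b := ((n : ℝ) - d) / 2) (by linarith) (by linarith)
    (by linarith [(d0.cast_nonneg : (0 : ℝ) ≤ d0)])
    (by linarith [(d.cast_nonneg : (0 : ℝ) ≤ d)])
  have hC : 0 ≤ 2 * (Gamma (n - d) / Gamma ((n - d) / 2) ^ 2) := by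
    have := Gamma_pos_of_pos (by linarith : (0 : ℝ) < n - d); positivity
  have hBF : BFJPEP d0 d n R R0 = 2 * (Gamma (n - d) / Gamma ((n - d) / 2) ^ 2) *
      ∫ φ in (0 : ℝ)..(π / 2), sin φ ^ (2 * (((n : ℝ) - d0) / 2) - 1) *
        cos φ ^ (2 * (((n : ℝ) - d) / 2) - 1) *
        ((n : ℝ) + sin φ ^ 2) ^ (((n : ℝ) - d) / 2) *
        ((n : ℝ) * (R / R0) + sin φ ^ 2) ^ (-(((n : ℝ) - d0) / 2)) := by
    unfold BFJPEP
    ring_nf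
  rw [sub_eq_add_neg, exp_add, exp_add, exp_logLaplaceBFJPEP (by omega) (by omega) hρ, hBF]
  constructor
  · have := mul_le_mul_of_nonneg_left hI.1 hC
    linarith
  · have := mul_le_mul_of_nonneg_left hI.2 hC
    linarith

theorem eventually_BFJPEP_mem_Icc (d0 d : ℕ) {R R0 : ℕ → ℝ} {c : ℝ} (hc : 0 < c)
    (hρ : Tendsto (fun n => R n / R0 n) atTop (𝓝 c)) :
    ∀ᶠ n in atTop, BFJPEP d0 d n (R n) (R0 n) ∈
      Icc (exp (logLaplaceBFJPEP d0 d n (R n / R0 n) - 1 / c))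
        (exp (logLaplaceBFJPEP d0 d n (R n / R0 n) + 1 / 2)) := by
  filter_upwards [hρ.eventually (lt_mem_nhds (half_lt_self hc)), eventually_ge_atTop (d0 + 2),
    eventually_ge_atTop (d + 2)] with n hρn hd0 hd
  have h := BFJPEP_mem_Icc ((half_pos hc).trans hρn) hd0 hd
  refine ⟨le_trans (exp_le_exp.2 ?_) h.1, h.2⟩
  have : 1 / (2 * (R n / R0 n)) ≤ 1 / c := one_div_le_one_div_of_le hc (by linarith)
  linarith

theorem isBigO_log_BFJPEP_sub_logLaplaceBFJPEP (d0 d : ℕ) {R R0 : ℕ → ℝ} {c : ℝ}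
    (hc : 0 < c) (hρ : Tendsto (fun n => R n / R0 n) atTop (𝓝 c)) :
    (fun n => log (BFJPEP d0 d n (R n) (R0 n)) - logLaplaceBFJPEP d0 d n (R n / R0 n))
      =O[atTop] (fun _ => (1 : ℝ)) := by
  refine (isBigO_one_iff ℝ).2 (isBoundedUnder_of_eventually_le (a := 1 / c + 1 / 2) ?_)
  filter_upwards [eventually_BFJPEP_mem_Icc d0 d hc hρ] with n h
  have hpos := (exp_pos _).trans_le h.1
  have hlow := (le_log_iff_exp_le hpos).2 h.1
  have hup := (log_le_iff_le_exp hpos).2 h.2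
  rw [Real.norm_eq_abs, abs_le]
  constructor <;> linarith [one_div_pos.2 hc]

theorem jpep_bic_equivalence_general (d0 dl dk : ℕ)
    (RSS0 RSSl RSSk : ℕ → ℝ)
    (cl ck : ℝ) (hcl : cl ∈ Set.Ioc (0 : ℝ) 1) (hck : ck ∈ Set.Ioc (0 : ℝ) 1)
    (htl : Tendsto (fun n : ℕ => RSSl n / RSS0 n) atTop (nhds cl))
    (htk : Tendsto (fun n : ℕ => RSSk n / RSS0 n) atTop (nhds ck)) :
    ∃ M : ℝ, ∀ᶠ n : ℕ in atTop,
      |(-2) * Real.log (BFJPEP d0 dl n (RSSl n) (RSS0 n) /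
            BFJPEP d0 dk n (RSSk n) (RSS0 n)) -
          ((n : ℝ) * Real.log (RSSl n / RSSk n) + ((dl : ℝ) - dk) * Real.log n)| ≤ M := by
  have hEl := isBigO_log_BFJPEP_sub_logLaplaceBFJPEP d0 dl hcl.1 htl
  have hEk := isBigO_log_BFJPEP_sub_logLaplaceBFJPEP d0 dk hck.1 htk
  have hG := (tendsto_logGammaFactor_sub_logGammaFactor_zero d0 dl).sub
    (tendsto_logGammaFactor_sub_logGammaFactor_zero d0 dk)
  have hρ := (htl.log hcl.1.ne').sub (htk.log hck.1.ne')
  have hsum := ((hEl.const_mul_left (-2)).add (hEk.const_mul_left 2)).sub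
    (((hG.isBigO_one ℝ).const_mul_left 2).add ((hρ.isBigO_one ℝ).const_mul_left (d0 : ℝ)))
  refine (isBigO_one_iff ℝ).1 (hsum.congr' ?_ EventuallyEq.rfl)
  filter_upwards [eventually_BFJPEP_mem_Icc d0 dl hcl.1 htl,
    eventually_BFJPEP_mem_Icc d0 dk hck.1 htk, htl.eventually (lt_mem_nhds hcl.1),
    htk.eventually (lt_mem_nhds hck.1)] with n hl hk hρl hρk
  have h0 : RSS0 n ≠ 0 := fun h => by simp [h] at hρl
  rw [log_div ((exp_pos _).trans_le hl.1).ne' ((exp_pos _).trans_le hk.1).ne',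
    ← div_div_div_cancel_right₀ h0 (RSSl n) (RSSk n), log_div hρl.ne' hρk.ne']
  simp only [logLaplaceBFJPEP]
  ring

/-- Theorem 1 of the paper: the difference between
`−2 log BF_{ℓk}^{J-PEP}` and `BIC_ℓ − BIC_k = n log(RSS_ℓ/RSS_k) + (d_ℓ−d_k) log n`
stays bounded as `n → ∞`. -/
theorem jpep_bic_equivalence (d0 dl dk : ℕ) (hd0l : d0 < dl) (hd0k : d0 < dk)
    (RSS0 RSSl RSSk : ℕ → ℝ)
    (h0 : ∀ n, 0 < RSS0 n) (hlpos : ∀ n, 0 < RSSl n) (hkpos : ∀ n, 0 < RSSk n)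
    (hl0 : ∀ n, RSSl n ≤ RSS0 n) (hk0 : ∀ n, RSSk n ≤ RSS0 n)
    (cl ck : ℝ) (hcl : cl ∈ Set.Ioc (0 : ℝ) 1) (hck : ck ∈ Set.Ioc (0 : ℝ) 1)
    (htl : Tendsto (fun n : ℕ => RSSl n / RSS0 n) atTop (nhds cl))
    (htk : Tendsto (fun n : ℕ => RSSk n / RSS0 n) atTop (nhds ck)) :
    ∃ M : ℝ, ∀ᶠ n : ℕ in atTop,
      |(-2) * Real.log (BFJPEP d0 dl n (RSSl n) (RSS0 n) /
            BFJPEP d0 dk n (RSSk n) (RSS0 n)) -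
          ((n : ℝ) * Real.log (RSSl n / RSSk n) + ((dl : ℝ) - dk) * Real.log n)| ≤ M :=
  jpep_bic_equivalence_general d0 dl dk RSS0 RSSl RSSk cl ck hcl hck htl htk
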